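/- arXiv:0901.3866 — 3 statements merged into one kernel-verified Lean document; each statement's English description precedes it below -/
import Mathlib

section
/- Let Λ be an infinite countable group, let Υ₁, …, Υ_m (m ≥ 2) be infinite abelian groups, and for each i let σ^i : Λ → Aut(Υ_i) be an action with trivial stabilizers. Let Υ = Υ₁ ∗ ⋯ ∗ Υ_m be the free product, let σ : Λ → Aut(Υ) be the diagonal action, and let Γ = Υ ⋊_σ Λ be the semidirect product. Then Γ is ICC: for every g ∈ Γ with g ≠ 1, the conjugacy class {x g x⁻¹ : x ∈ Γ} is infinite. -/
/-!
Write `x = (w, g)`. If `w ≠ 1`, conjugating by `(1, k)` gives `(τ k w, k g k⁻¹)`; the diagonal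
action fixes a nontrivial element only if it fixes a letter of its reduced word, so `k ↦ τ k w`
is injective and `Λ` is infinite. If `w = 1`, then `g ≠ 1`, and conjugating by `(u, 1)` with
`u ∈ Υ₀` gives the first coordinate `u · σ_g(u)⁻¹`, injective in `u` because `Υ₀` is abelian and
`σ_g` has no nontrivial fixed point.
-/

open Monoid.CoprodI SemidirectProduct

theorem MulEquiv.div_apply_injective {A : Type*} [CommGroup A] (e : A ≃* A)
    (he : ∀ a, e a = a → a = 1) : Function.Injective fun a => a / e a :=
  (injective_iff_map_eq_one (MonoidHom.id A / e.toMonoidHom)).2 fun a ha =>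
    he a (div_eq_one.1 ha).symm

namespace Monoid.CoprodI

variable {ι : Type*} {M : ι → Type*} [∀ i, Monoid (M i)]

def Word.map (e : ∀ i, M i ≃* M i) (w : Word M) : Word M where
  toList := w.toList.map fun l => ⟨l.1, e l.1 l.2⟩
  ne_one := by
    simp only [List.mem_map]
    rintro _ ⟨l, hl, rfl⟩
    exact (map_ne_one_iff (e l.1) (e l.1).injective).2 (w.ne_one l hl)
  chain_ne := (List.isChain_map _).2 w.chain_ne

theorem Word.prod_map {e : ∀ i, M i ≃* M i} {f : CoprodI M →* CoprodI M}
    (hf : ∀ i (m : M i), f (of m) = of (e i m)) (w : Word M) :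
    (w.map e).prod = f w.prod := by
  simp only [prod, map, List.map_map, map_list_prod]
  exact congrArg List.prod (List.map_congr_left fun l _ => (hf l.1 l.2).symm)

theorem exists_fixed_letter_of_apply_eq_self {e : ∀ i, M i ≃* M i} {f : CoprodI M →* CoprodI M}
    (hf : ∀ i (m : M i), f (of m) = of (e i m)) {x : CoprodI M} (hx : x ≠ 1) (hfx : f x = x) :
    ∃ i, ∃ m : M i, m ≠ 1 ∧ e i m = m := by
  classical
  set w := Word.equiv x
  have hprod : w.prod = x := Word.equiv.symm_apply_apply x
  have hw : w.map e = w := Word.equiv.symm.injective <| by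
    change (w.map e).prod = w.prod
    rw [Word.prod_map hf, hprod, hfx]
  obtain ⟨⟨i, m⟩, L, hL⟩ : ∃ l L, w.toList = l :: L := by
    refine List.exists_cons_of_ne_nil fun h => hx ?_
    rw [← hprod, Word.prod, h, List.map_nil, List.prod_nil]
  refine ⟨i, m, w.ne_one ⟨i, m⟩ (hL ▸ List.mem_cons_self), ?_⟩
  replace hw := congrArg Word.toList hw
  simp only [Word.map, hL, List.map_cons, List.cons.injEq, Sigma.mk.injEq, heq_eq_eq] at hw
  exact hw.1.2

end Monoid.CoprodI

namespace SemidirectProduct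

variable {N G : Type*} [Group N] [Group G] {φ : G →* MulAut N}

theorem infinite_conjugates_of_stabilizer_left_trivial [Infinite G] {x : N ⋊[φ] G}
    (hx : ∀ k, φ k x.left = x.left → k = 1) : {y | ∃ z, z * x * z⁻¹ = y}.Infinite := by
  refine Set.infinite_of_injective_forall_mem (f := fun k => inr k * x * (inr k)⁻¹)
    (fun k k' hkk' => ?_) fun k => ⟨inr k, rfl⟩
  have h : φ k x.left = φ k' x.left := by simpa using congrArg left hkk'
  rw [← inv_mul_eq_one]
  exact hx _ (by simp [← h])

theorem infinite_conjugates_inr {α : Type*} [Infinite α] {g : G} {f : α → N}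
    (hf : Function.Injective fun a => f a * φ g (f a)⁻¹) :
    {y | ∃ z, z * (inr g : N ⋊[φ] G) * z⁻¹ = y}.Infinite := by
  refine Set.infinite_of_injective_forall_mem
    (f := fun a => inl (f a) * inr g * (inl (f a) : N ⋊[φ] G)⁻¹)
    (fun a b hab => hf ?_) fun a => ⟨inl (f a), rfl⟩
  simpa using congrArg left hab

end SemidirectProduct

theorem semidirect_product_coprodI_icc_general
    (m : ℕ) (hm : 2 ≤ m) (Λ : Type*) [Group Λ] [Infinite Λ]
    (Υ : Fin m → Type*) [∀ i, CommGroup (Υ i)] [∀ i, Infinite (Υ i)]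
    (σ : ∀ i, Λ →* MulAut (Υ i))
    (hσ : ∀ i, ∀ h : Υ i, h ≠ 1 → ∀ g : Λ, σ i g h = h → g = 1)
    (τ : Λ →* MulAut (Monoid.CoprodI Υ))
    (hτ : ∀ (g : Λ) (i : Fin m) (h : Υ i),
      τ g (Monoid.CoprodI.of h) = Monoid.CoprodI.of (σ i g h)) :
    ∀ x : Monoid.CoprodI Υ ⋊[τ] Λ, x ≠ 1 →
      {y : Monoid.CoprodI Υ ⋊[τ] Λ | ∃ z, z * x * z⁻¹ = y}.Infinite := by
  intro x hx
  by_cases hleft : x.left = 1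
  · have hg : x.right ≠ 1 := fun h => hx (SemidirectProduct.ext hleft h)
    let i : Fin m := ⟨0, by omega⟩
    have hconj (u : Υ i) : of u * τ x.right (of u)⁻¹ = of (u / σ i x.right u) := by
      simp [hτ, div_eq_mul_inv]
    rw [← inl_left_mul_inr_right x, hleft, map_one, one_mul]
    refine infinite_conjugates_inr (f := fun u : Υ i => of u) ?_
    simp only [hconj]
    exact (of_injective i).comp <| (σ i x.right).div_apply_injective fun u hu =>
      by_contra fun hu1 => hg (hσ i u hu1 _ hu)
  · refine infinite_conjugates_of_stabilizer_left_trivial fun k hk => ?_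
    obtain ⟨i, u, hu, hfix⟩ := exists_fixed_letter_of_apply_eq_self (f := (τ k).toMonoidHom) (hτ k) hleft hk
    exact hσ i u hu k hfix

/-- Let `Λ` be an infinite countable group, `Υ₁, …, Υ_m` (`m ≥ 2`) infinite abelian groups
with actions `σ i : Λ →* MulAut (Υ i)` having trivial stabilizers. Let `τ` denote the
diagonal action of `Λ` on the free product `Monoid.CoprodI Υ` (characterized on the
canonical generators). Then the semidirect product `Γ = CoprodI Υ ⋊[τ] Λ` is ICC. -/
theorem semidirect_product_coprodI_icc
    (m : ℕ) (hm : 2 ≤ m) (Λ : Type*) [Group Λ] [Infinite Λ] [Countable Λ]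
    (Υ : Fin m → Type*) [∀ i, CommGroup (Υ i)] [∀ i, Infinite (Υ i)]
    (σ : ∀ i, Λ →* MulAut (Υ i))
    (hσ : ∀ i, ∀ h : Υ i, h ≠ 1 → ∀ g : Λ, σ i g h = h → g = 1)
    (τ : Λ →* MulAut (Monoid.CoprodI Υ))
    (hτ : ∀ (g : Λ) (i : Fin m) (h : Υ i),
      τ g (Monoid.CoprodI.of h) = Monoid.CoprodI.of (σ i g h)) :
    ∀ x : Monoid.CoprodI Υ ⋊[τ] Λ, x ≠ 1 →
      {y : Monoid.CoprodI Υ ⋊[τ] Λ | ∃ z, z * x * z⁻¹ = y}.Infinite :=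
  semidirect_product_coprodI_icc_general m hm Λ Υ σ hσ τ hτ
end

section
/- Let H̃ be a complex Hilbert space, K ⊆ H̃ a closed subspace, and P : H̃ → H̃ the orthogonal projection onto K. Let β and u be unitary operators on H̃ such that β(ξ) = ξ for all ξ ∈ K and β ∘ u ∘ β = u⁻¹. Then for every x ∈ K, ‖x − u²(x)‖ ≤ 2 ‖u(x) − P(u(x))‖. -/
/-!
Since `β` fixes `x` and `β u β = u⁻¹`, applying `u⁻¹` turns `x - u² x` into `β (u x) - u x`;
an isometry fixing a point `k` moves any vector `y` by at most `2 ‖y - k‖`, and `k = P (u x)` is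
fixed by `β`.
-/

theorem LinearIsometry.norm_map_sub_self_le_two_mul {R E : Type*} [Semiring R]
    [SeminormedAddCommGroup E] [Module R E] (f : E →ₗᵢ[R] E) (y : E) {k : E} (hk : f k = k) :
    ‖f y - y‖ ≤ 2 * ‖y - k‖ :=
  calc ‖f y - y‖ = ‖f (y - k) - (y - k)‖ := by rw [map_sub, hk, sub_sub_sub_cancel_right]
    _ ≤ ‖f (y - k)‖ + ‖y - k‖ := norm_sub_le _ _
    _ = 2 * ‖y - k‖ := by rw [f.norm_map]; ring

theorem LinearIsometryEquiv.norm_sub_apply_apply_eq_of_conj_eq_symm {R E : Type*} [Semiring R]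
    [SeminormedAddCommGroup E] [Module R E] (u β : E ≃ₗᵢ[R] E)
    (hconj : ∀ ξ, β (u (β ξ)) = u.symm ξ) {x : E} (hx : β x = x) :
    ‖x - u (u x)‖ = ‖β (u x) - u x‖ := by
  rw [← u.symm.norm_map, map_sub, u.symm_apply_apply, ← hconj, hx]

theorem popa_transversality_general
    {H : Type*} [NormedAddCommGroup H] [InnerProductSpace ℂ H]
    (K : Submodule ℂ H)
    (P : H →L[ℂ] H) (hPmem : ∀ x : H, P x ∈ K)
    (β u : H ≃ₗᵢ[ℂ] H)
    (hβ : ∀ ξ ∈ K, β ξ = ξ)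
    (hmal : ∀ ξ : H, β (u (β ξ)) = u.symm ξ) :
    ∀ x ∈ K, ‖x - u (u x)‖ ≤ 2 * ‖u x - P (u x)‖ := by
  intro x hx
  rw [u.norm_sub_apply_apply_eq_of_conj_eq_symm β hmal (hβ x hx)]
  exact β.toLinearIsometry.norm_map_sub_self_le_two_mul (u x) (hβ _ (hPmem _))

/-- Popa's transversality inequality, abstract Hilbert-space form: if `K` is a closed
subspace of a complex Hilbert space `H̃`, `P` is the orthogonal projection onto `K`
(characterized by `P x ∈ K` and `x - P x ⊥ K`), and `β`, `u` are unitaries on `H̃` with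
`β` fixing `K` pointwise and `β ∘ u ∘ β = u⁻¹`, then for every `x ∈ K` one has
`‖x - u²x‖ ≤ 2 ‖u x - P (u x)‖`. -/
theorem popa_transversality
    {H : Type*} [NormedAddCommGroup H] [InnerProductSpace ℂ H] [CompleteSpace H]
    (K : Submodule ℂ H) (hK : IsClosed (K : Set H))
    (P : H →L[ℂ] H) (hPmem : ∀ x : H, P x ∈ K) (hPortho : ∀ x : H, x - P x ∈ Kᗮ)
    (β u : H ≃ₗᵢ[ℂ] H)
    (hβ : ∀ ξ ∈ K, β ξ = ξ)
    (hmal : ∀ ξ : H, β (u (β ξ)) = u.symm ξ) :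
    ∀ x ∈ K, ‖x - u (u x)‖ ≤ 2 * ‖u x - P (u x)‖ :=
  popa_transversality_general K P hPmem β u hβ hmal
end

section
/- Let Λ be an infinite group acting on an infinite abelian group Υ via σ : Λ → Aut(Υ) with trivial stabilizers. Then the semidirect product Υ ⋊_σ Λ is ICC: for every element g ≠ 1 of Υ ⋊_σ Λ, the conjugacy class {x g x⁻¹} is infinite. -/
/-! Write `x = (n, g)`. If `g = 1`, conjugating by `Λ` moves `n` along its orbit, which is
infinite because its stabilizer is trivial. If `g ≠ 1`, conjugating by `k ∈ Υ` gives
`(k · σ_g(k)⁻¹ · n, g)`, and `k ↦ k · σ_g(k)⁻¹` is injective since `σ_g` fixes only `1`.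
-/

open Function SemidirectProduct

lemma MonoidHom.injective_apply_of_trivial_stabilizer {Λ Υ : Type*} [Group Λ] [Group Υ]
    (σ : Λ →* MulAut Υ) {n : Υ} (hn : ∀ g, σ g n = n → g = 1) :
    Injective fun g => σ g n := by
  intro s t hst
  have hfix : σ (t⁻¹ * s) n = n := by
    simp only [map_mul, map_inv, MulAut.mul_apply, hst, MulAut.inv_apply_self]
  exact (inv_mul_eq_one.mp (hn _ hfix)).symm

lemma MulAut.injective_div_apply_self {Υ : Type*} [CommGroup Υ] (f : MulAut Υ)
    (hf : ∀ k, f k = k → k = 1) : Injective fun k => k / f k := by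
  intro k k' hkk'
  have hfix : f (k / k') = k / k' := by
    rw [map_div]
    exact (div_eq_div_iff_div_eq_div.mp hkk').symm
  exact div_eq_one.mp (hf _ hfix)

namespace SemidirectProduct

variable {N G : Type*} [Group G]

lemma inl_mul_mul_inl_inv [CommGroup N] {φ : G →* MulAut N} (k : N) (x : N ⋊[φ] G) :
    inl k * x * (inl k)⁻¹ = ⟨k / φ x.right k * x.left, x.right⟩ := by
  ext
  · simp only [mul_left, left_inl, right_inl, mul_right, inv_left, map_one, one_mul,
      inv_one, MulAut.one_apply, map_inv, div_eq_mul_inv]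
    exact mul_right_comm k _ _
  · simp

lemma conjugatesOf_inl_infinite [Group N] [Infinite G] {φ : G →* MulAut N} {n : N}
    (hn : ∀ g, φ g n = n → g = 1) : (conjugatesOf (inl n : N ⋊[φ] G)).Infinite := by
  refine Set.infinite_of_injective_forall_mem
    (inl_injective.comp (φ.injective_apply_of_trivial_stabilizer hn)) fun g => ?_
  exact isConj_iff.mpr ⟨inr g, by simp [inl_aut, map_inv]⟩

lemma conjugatesOf_infinite_of_trivial_fixed_points [CommGroup N] [Infinite N]
    {φ : G →* MulAut N} {x : N ⋊[φ] G} (hx : ∀ k, φ x.right k = k → k = 1) :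
    (conjugatesOf x).Infinite := by
  have hinj : Injective fun k : N => (⟨k / φ x.right k * x.left, x.right⟩ : N ⋊[φ] G) :=
    fun k k' h => (φ x.right).injective_div_apply_self hx (mul_right_cancel (congrArg left h))
  refine Set.infinite_of_injective_forall_mem hinj fun k => ?_
  exact isConj_iff.mpr ⟨inl k, inl_mul_mul_inl_inv k x⟩

end SemidirectProduct

/-- If an infinite group `Λ` acts on an infinite abelian group `Υ` with trivial
stabilizers, then the semidirect product `Υ ⋊[σ] Λ` is ICC: every nontrivial element has
an infinite conjugacy class. -/
theorem semidirect_infinite_abelian_icc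
    {Λ Υ : Type*} [Group Λ] [Infinite Λ] [CommGroup Υ] [Infinite Υ]
    (σ : Λ →* MulAut Υ)
    (hσ : ∀ h : Υ, h ≠ 1 → ∀ g : Λ, σ g h = h → g = 1) :
    ∀ x : Υ ⋊[σ] Λ, x ≠ 1 →
      {y : Υ ⋊[σ] Λ | ∃ z, z * x * z⁻¹ = y}.Infinite := by
  intro x hx
  have hset : {y | ∃ z, z * x * z⁻¹ = y} = conjugatesOf x := Set.ext fun _ => isConj_iff.symm
  rw [hset]
  by_cases hright : x.right = 1
  · have hx_inl : x = inl x.left := by ext <;> simp [hright]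
    have hleft : x.left ≠ 1 := fun h => hx (by rw [hx_inl, h, map_one])
    rw [hx_inl]
    exact conjugatesOf_inl_infinite (hσ _ hleft)
  · exact conjugatesOf_infinite_of_trivial_fixed_points fun k hk =>
      by_contra fun hk_ne => hright (hσ k hk_ne _ hk)
end
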